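/- arXiv:1404.0452 — 8 statements merged into one kernel-verified Lean document; each statement's English description precedes it below -/
import Mathlib

section
/- Let m ≥ 2 be even and let A be a real m-th order n-dimensional symmetric tensor. Then A has at least one H-eigenvalue, i.e., there exist λ ∈ ℝ and a nonzero x ∈ ℝⁿ with A x^{m-1} = λ x^{[m-1]}. -/
/-!
Maximize the form `x ↦ A xᵐ` over the set `∑ᵢ xᵢᵐ = 1`, which is compact because `m` is even.
For symmetric `A` the gradient of the form is `m · A x^{m-1}`, and the gradient `m · x^{[m-1]}` of
the constraint does not vanish on the constraint set, so the Lagrange multiplier rule makes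
`A x^{m-1}` a multiple of `x^{[m-1]}` at the maximizer.
-/

open Finset

variable {m n : ℕ}

/-- The homogeneous form `A xᵐ` of an `m`-th order `n`-dimensional tensor `A`. -/
noncomputable def tApply (A : (Fin m → Fin n) → ℝ) (x : Fin n → ℝ) : ℝ :=
  ∑ f : Fin m → Fin n, A f * ∏ j, x (f j)

/-- A tensor is symmetric if its entries are invariant under any permutation of the indices. -/
def IsSymmT (A : (Fin m → Fin n) → ℝ) : Prop :=
  ∀ (σ : Equiv.Perm (Fin m)) (f : Fin m → Fin n), A (f ∘ σ) = A f

/-- The `i`-th component of the vector `A x^{m-1}`: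
`Σ_{i₂,…,i_m} a_{i i₂ ⋯ i_m} x_{i₂} ⋯ x_{i_m}`. -/
noncomputable def tVec [NeZero m] (A : (Fin m → Fin n) → ℝ) (x : Fin n → ℝ) (i : Fin n) : ℝ :=
  ∑ f ∈ univ.filter (fun f : Fin m → Fin n => f 0 = i),
    A f * ∏ j ∈ univ.erase (0 : Fin m), x (f j)

/-- The `i`-th component of the vector `A x^{m-1}` for complex `x`. -/
noncomputable def tVecC [NeZero m] (A : (Fin m → Fin n) → ℝ) (x : Fin n → ℂ) (i : Fin n) : ℂ :=
  ∑ f ∈ univ.filter (fun f : Fin m → Fin n => f 0 = i),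
    (A f : ℂ) * ∏ j ∈ univ.erase (0 : Fin m), x (f j)

/-- The sum of the absolute values of the off-diagonal entries in the `i`-th row of `A`. -/
noncomputable def offDiagSum [NeZero m] (A : (Fin m → Fin n) → ℝ) (i : Fin n) : ℝ :=
  ∑ f ∈ univ.filter (fun f : Fin m → Fin n => f 0 = i ∧ f ≠ (fun _ => i)), |A f|

/-- A diagonally dominated tensor. -/
def DiagDom [NeZero m] (A : (Fin m → Fin n) → ℝ) : Prop :=
  ∀ i : Fin n, offDiagSum A i ≤ A (fun _ => i)

/-- A strictly diagonally dominated tensor. -/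
def StrictDiagDom [NeZero m] (A : (Fin m → Fin n) → ℝ) : Prop :=
  ∀ i : Fin n, offDiagSum A i < A (fun _ => i)

/-- The sum of all the entries in the `i`-th row of `A`. -/
noncomputable def rowSum [NeZero m] (A : (Fin m → Fin n) → ℝ) (i : Fin n) : ℝ :=
  ∑ f ∈ univ.filter (fun f : Fin m → Fin n => f 0 = i), A f

/-- A B₀ tensor. -/
def IsB0 [NeZero m] (A : (Fin m → Fin n) → ℝ) : Prop :=
  ∀ i : Fin n, 0 ≤ rowSum A i ∧
    ∀ f : Fin m → Fin n, f 0 = i → f ≠ (fun _ => i) →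
      A f ≤ (1 / (n : ℝ) ^ (m - 1)) * rowSum A i

/-- A B tensor. -/
def IsB [NeZero m] (A : (Fin m → Fin n) → ℝ) : Prop :=
  ∀ i : Fin n, 0 < rowSum A i ∧
    ∀ f : Fin m → Fin n, f 0 = i → f ≠ (fun _ => i) →
      A f < (1 / (n : ℝ) ^ (m - 1)) * rowSum A i

/-- A Z tensor: all off-diagonal entries are non-positive. -/
def IsZ [NeZero m] (A : (Fin m → Fin n) → ℝ) : Prop :=
  ∀ (i : Fin n) (f : Fin m → Fin n), f 0 = i → f ≠ (fun _ => i) → A f ≤ 0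

/-- The partially all one tensor `E^J`. -/
noncomputable def allOne (m : ℕ) {n : ℕ} (J : Finset (Fin n)) : (Fin m → Fin n) → ℝ :=
  fun f => if ∀ j, f j ∈ J then 1 else 0

/-- `Ĵ(B)`: the set of rows of `B` with at least one positive off-diagonal entry. -/
noncomputable def hatJ [NeZero m] (B : (Fin m → Fin n) → ℝ) : Finset (Fin n) :=
  univ.filter fun i => ∃ f : Fin m → Fin n, f 0 = i ∧ f ≠ (fun _ => i) ∧ 0 < B f

section Gradient

variable {A : (Fin m → Fin n) → ℝ}

theorem IsSymmT.sum_mul_prod_erase_mul_eq (hA : IsSymmT A) (x v : Fin n → ℝ) (j₀ j : Fin m) :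
    ∑ f : Fin m → Fin n, A f * ((∏ k ∈ univ.erase j, x (f k)) * v (f j)) =
      ∑ f : Fin m → Fin n, A f * ((∏ k ∈ univ.erase j₀, x (f k)) * v (f j₀)) := by
  set σ := Equiv.swap j₀ j
  refine Fintype.sum_equiv (σ.arrowCongr (Equiv.refl _)) _ _ fun f => ?_
  have hprod : ∏ k ∈ univ.erase j, x (f k) = ∏ k ∈ univ.erase j₀, x (f (σ k)) :=
    prod_nbij' σ σ (by simp [σ, Equiv.swap_apply_eq_iff]) (by simp [σ, Equiv.swap_apply_eq_iff])
      (by simp [σ]) (by simp [σ]) (by simp [σ])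
  change _ = A (f ∘ σ.symm) * ((∏ k ∈ univ.erase j₀, x (f (σ.symm k))) * v (f (σ.symm j₀)))
  rw [Equiv.symm_swap, hA, hprod, Equiv.swap_apply_left]

theorem sum_mul_prod_erase_zero_mul_eq_sum_tVec [NeZero m] (x v : Fin n → ℝ) :
    ∑ f : Fin m → Fin n, A f * ((∏ k ∈ univ.erase 0, x (f k)) * v (f 0)) =
      ∑ i, tVec A x i * v i := by
  rw [← sum_fiberwise univ (fun f : Fin m → Fin n => f 0)]
  refine sum_congr rfl fun i _ => ?_
  rw [tVec, sum_mul]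
  refine sum_congr rfl fun f hf => ?_
  rw [(mem_filter.mp hf).2]
  ring

theorem hasStrictFDerivAt_tApply (x : Fin n → ℝ) :
    HasStrictFDerivAt (tApply A)
      (∑ f : Fin m → Fin n, A f • ∑ j, (∏ k ∈ univ.erase j, x (f k)) •
        (ContinuousLinearMap.proj (f j) : (Fin n → ℝ) →L[ℝ] ℝ)) x :=
  HasStrictFDerivAt.fun_sum fun f _ =>
    (HasStrictFDerivAt.finsetProd (g := fun j (y : Fin n → ℝ) => y (f j)) fun j _ =>
      hasStrictFDerivAt_apply (f j) x).const_mul (A f)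

theorem continuous_tApply : Continuous (tApply A) :=
  continuous_iff_continuousAt.2 fun x => (hasStrictFDerivAt_tApply x).continuousAt

theorem IsSymmT.hasStrictFDerivAt_tApply [NeZero m] (hA : IsSymmT A) (x : Fin n → ℝ) :
    HasStrictFDerivAt (tApply A)
      (∑ i, ((m : ℝ) * tVec A x i) • (ContinuousLinearMap.proj i : (Fin n → ℝ) →L[ℝ] ℝ)) x := by
  convert _root_.hasStrictFDerivAt_tApply x using 1
  ext v
  have hswap := fun j => hA.sum_mul_prod_erase_mul_eq x v 0 j
  simp only [FunLike.coe_sum, Finset.sum_apply, FunLike.coe_smul, Pi.smul_apply,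
    ContinuousLinearMap.proj_apply, smul_eq_mul, mul_sum]
  rw [sum_comm]
  simp only [hswap, sum_mul_prod_erase_zero_mul_eq_sum_tVec]
  simp [sum_const, mul_sum, mul_assoc]

end Gradient

section PowSumSphere

variable {ι : Type*} [Fintype ι]

theorem isCompact_setOf_sum_pow_eq_one (hm : Even m) (hm0 : m ≠ 0) :
    IsCompact {x : ι → ℝ | ∑ i, x i ^ m = 1} := by
  refine Metric.isCompact_of_isClosed_isBounded (isClosed_eq (by fun_prop) continuous_const)
    ((Metric.isBounded_closedBall (x := 0) (r := 1)).subset ?_)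
  intro x hx
  rw [Metric.mem_closedBall, dist_zero_right, pi_norm_le_iff_of_nonneg zero_le_one]
  intro i
  have hle : |x i| ^ m ≤ 1 := by
    rw [hm.pow_abs, ← hx.out]
    exact single_le_sum (f := fun k => x k ^ m) (fun k _ => hm.pow_nonneg _) (mem_univ i)
  exact (pow_le_one_iff_of_nonneg (abs_nonneg _) hm0).mp hle

theorem setOf_sum_pow_eq_one_nonempty [Nonempty ι] (hm0 : m ≠ 0) :
    {x : ι → ℝ | ∑ i, x i ^ m = 1}.Nonempty := by
  classical
  obtain ⟨i⟩ := ‹Nonempty ι›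
  refine ⟨Pi.single i 1, ?_⟩
  rw [Set.mem_ofPred_eq, sum_eq_single i (fun j _ hj => by simp [hj, hm0]) (by simp)]
  simp

theorem hasStrictFDerivAt_sum_pow (x : ι → ℝ) :
    HasStrictFDerivAt (fun y : ι → ℝ => ∑ i, y i ^ m)
      (∑ i, ((m : ℝ) * x i ^ (m - 1)) • (ContinuousLinearMap.proj i : (ι → ℝ) →L[ℝ] ℝ)) x :=
  HasStrictFDerivAt.fun_sum fun i _ =>
    (hasStrictDerivAt_pow m (x i)).comp_hasStrictFDerivAt x (hasStrictFDerivAt_apply i x)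

theorem IsLocalExtrOn.exists_eq_mul_pow_of_sum_pow_eq_one (hm0 : m ≠ 0) {φ : (ι → ℝ) → ℝ}
    {g x : ι → ℝ} (hextr : IsLocalExtrOn φ {y | ∑ i, y i ^ m = 1} x) (hx : ∑ i, x i ^ m = 1)
    (hφ : HasStrictFDerivAt φ (∑ i, g i • (ContinuousLinearMap.proj i : (ι → ℝ) →L[ℝ] ℝ)) x) :
    ∃ μ : ℝ, ∀ i, g i = μ * x i ^ (m - 1) := by
  classical
  rw [← hx] at hextr
  obtain ⟨a, b, hab, h⟩ :=
    hextr.exists_multipliers_of_hasStrictFDerivAt_1d (hasStrictFDerivAt_sum_pow x) hφ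
  have hcoord : ∀ i, a * (m * x i ^ (m - 1)) + b * g i = 0 := fun i => by
    simpa [Pi.single_apply] using congr($h (Pi.single i 1))
  have hb : b ≠ 0 := by
    rintro rfl
    have ha : a ≠ 0 := by simpa using hab
    have hpow : ∀ i, x i ^ m = 0 := fun i => by
      have : x i ^ (m - 1) = 0 := by simpa [ha, hm0] using hcoord i
      rw [← Nat.sub_one_add_one hm0, pow_succ, this, zero_mul]
    simp [hpow] at hx
  refine ⟨-(a * m) / b, fun i => ?_⟩
  field_simp
  linarith [hcoord i]

end PowSumSphere

theorem even_order_symmetric_tensor_has_H_eigenvalue_general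
    {m n : ℕ} [NeZero m] (hmeven : Even m) (hn : 1 ≤ n)
    (A : (Fin m → Fin n) → ℝ) (hA : IsSymmT A) :
    ∃ (lam : ℝ) (x : Fin n → ℝ), x ≠ 0 ∧
      ∀ i : Fin n, tVec A x i = lam * x i ^ (m - 1) := by
  have hm0 : m ≠ 0 := NeZero.ne m
  have : Nonempty (Fin n) := ⟨⟨0, hn⟩⟩
  obtain ⟨x, hx, hmax⟩ := (isCompact_setOf_sum_pow_eq_one (ι := Fin n) hmeven hm0).exists_isMaxOn
    (setOf_sum_pow_eq_one_nonempty hm0) continuous_tApply.continuousOn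
  obtain ⟨μ, hμ⟩ := hmax.isExtr.localize.exists_eq_mul_pow_of_sum_pow_eq_one hm0 hx
    (hA.hasStrictFDerivAt_tApply x)
  refine ⟨μ / m, x, ?_, fun i => ?_⟩
  · rintro rfl
    simp [hm0] at hx
  · have hm : (m : ℝ) ≠ 0 := Nat.cast_ne_zero.2 hm0
    rw [div_mul_eq_mul_div, eq_div_iff hm, mul_comm, ← hμ i]

/-- An even order (`m ≥ 2`) real symmetric tensor always has an H-eigenvalue. -/
theorem even_order_symmetric_tensor_has_H_eigenvalue
    {m n : ℕ} [NeZero m] (hm : 2 ≤ m) (hmeven : Even m) (hn : 1 ≤ n)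
    (A : (Fin m → Fin n) → ℝ) (hA : IsSymmT A) :
    ∃ (lam : ℝ) (x : Fin n → ℝ), x ≠ 0 ∧
      ∀ i : Fin n, tVec A x i = lam * x i ^ (m - 1) :=
  even_order_symmetric_tensor_has_H_eigenvalue_general hmeven hn A hA
end

section
/- Let A = (a_{i₁⋯i_m}) be a real m-th order n-dimensional tensor and let λ ∈ ℂ be an eigenvalue of A, i.e., there is a nonzero x ∈ ℂⁿ with A x^{m-1} = λ x^{[m-1]}. Then there exists an index i ∈ {1,…,n} such that |λ − a_{i⋯i}| ≤ Σ { |a_{i i₂⋯i_m}| : i₂,…,i_m ∈ {1,…,n}, (i₂,…,i_m) ≠ (i,…,i) }. -/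
open Finset

variable {m n : ℕ}

/-! Choose `i` with `|x_i|` maximal. In row `i` of `A x^{m-1} = λ x^{[m-1]}`, move the diagonal term
to the left: `(λ - a_{i⋯i}) x_i^{m-1} = Σ_{off-diagonal} a_{i i₂⋯i_m} x_{i₂}⋯x_{i_m}`. Each product on
the right has modulus at most `|x_i|^{m-1}`, so dividing by `|x_i|^{m-1} > 0` gives the disc. -/

section Gershgorin

variable [NeZero m]

noncomputable def tVecCOffDiag (A : (Fin m → Fin n) → ℝ) (x : Fin n → ℂ) (i : Fin n) : ℂ :=
  ∑ f ∈ univ.filter (fun f : Fin m → Fin n => f 0 = i ∧ f ≠ (fun _ => i)),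
    (A f : ℂ) * ∏ j ∈ univ.erase (0 : Fin m), x (f j)

lemma tVecC_eq_diag_add_offDiag (A : (Fin m → Fin n) → ℝ) (x : Fin n → ℂ) (i : Fin n) :
    tVecC A x i = (A fun _ => i : ℂ) * x i ^ (m - 1) + tVecCOffDiag A x i := by
  have hdiag : (fun _ => i : Fin m → Fin n) ∈ univ.filter (fun f : Fin m → Fin n => f 0 = i) := by
    simp
  have hoff : (univ.filter (fun f : Fin m → Fin n => f 0 = i)).erase (fun _ => i) =
      univ.filter (fun f : Fin m → Fin n => f 0 = i ∧ f ≠ (fun _ => i)) := by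
    ext f
    simp [and_comm]
  rw [tVecC, tVecCOffDiag, ← hoff, ← add_sum_erase _ _ hdiag]
  simp

lemma norm_prod_erase_zero_le {x : Fin n → ℂ} {M : ℝ} (hM : ∀ j, ‖x j‖ ≤ M) (f : Fin m → Fin n) :
    ‖∏ j ∈ univ.erase (0 : Fin m), x (f j)‖ ≤ M ^ (m - 1) := by
  rw [norm_prod]
  calc ∏ j ∈ univ.erase (0 : Fin m), ‖x (f j)‖
      ≤ ∏ _j ∈ univ.erase (0 : Fin m), M :=
        prod_le_prod (fun _ _ => norm_nonneg _) (fun j _ => hM (f j))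
    _ = M ^ (m - 1) := by simp

lemma norm_tVecCOffDiag_le (A : (Fin m → Fin n) → ℝ) {x : Fin n → ℂ} {M : ℝ}
    (hM : ∀ j, ‖x j‖ ≤ M) (i : Fin n) :
    ‖tVecCOffDiag A x i‖ ≤ offDiagSum A i * M ^ (m - 1) := by
  rw [tVecCOffDiag, offDiagSum, sum_mul]
  refine (norm_sum_le _ _).trans (sum_le_sum fun f _ => ?_)
  rw [norm_mul, Complex.norm_real, Real.norm_eq_abs]
  exact mul_le_mul_of_nonneg_left (norm_prod_erase_zero_le hM f) (abs_nonneg _)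

end Gershgorin

theorem eigenvalue_gershgorin_general
    {m n : ℕ} [NeZero m]
    (A : (Fin m → Fin n) → ℝ) (lam : ℂ) (x : Fin n → ℂ) (hx : x ≠ 0)
    (heig : ∀ i : Fin n, tVecC A x i = lam * x i ^ (m - 1)) :
    ∃ i : Fin n, ‖lam - ((A fun _ => i : ℝ) : ℂ)‖ ≤ offDiagSum A i := by
  obtain ⟨j, hj⟩ := Function.ne_iff.mp hx
  have : Nonempty (Fin n) := ⟨j⟩
  obtain ⟨i, hi⟩ := Finite.exists_max fun k => ‖x k‖
  have hxi : 0 < ‖x i‖ := (norm_pos_iff.mpr hj).trans_le (hi j)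
  have hrow : (lam - (A fun _ => i : ℂ)) * x i ^ (m - 1) = tVecCOffDiag A x i := by
    linear_combination (heig i).symm.trans (tVecC_eq_diag_add_offDiag A x i)
  refine ⟨i, le_of_mul_le_mul_right ?_ (pow_pos hxi (m - 1))⟩
  calc ‖lam - (A fun _ => i : ℂ)‖ * ‖x i‖ ^ (m - 1) = ‖tVecCOffDiag A x i‖ := by
        rw [← hrow, norm_mul, norm_pow]
    _ ≤ offDiagSum A i * ‖x i‖ ^ (m - 1) := norm_tVecCOffDiag_le A hi i

/-- every (complex) eigenvalue of a real tensor lies in a Gershgorin-type disc: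
`|λ − a_{i⋯i}| ≤ Σ {|a_{i i₂⋯i_m}| : (i₂,…,i_m) ≠ (i,…,i)}` for some row `i`. -/
theorem eigenvalue_gershgorin
    {m n : ℕ} [NeZero m] (hm : 2 ≤ m) (hn : 1 ≤ n)
    (A : (Fin m → Fin n) → ℝ) (lam : ℂ) (x : Fin n → ℂ) (hx : x ≠ 0)
    (heig : ∀ i : Fin n, tVecC A x i = lam * x i ^ (m - 1)) :
    ∃ i : Fin n, ‖lam - ((A fun _ => i : ℝ) : ℂ)‖ ≤ offDiagSum A i :=
  eigenvalue_gershgorin_general A lam x hx heig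
end

section
/- Let m ≥ 2 be even and let A be a real m-th order n-dimensional symmetric tensor. If A is diagonally dominated, then A is positive semi-definite: A xᵐ ≥ 0 for all x ∈ ℝⁿ. -/
open Finset

variable {m n : ℕ}

private lemma amgm_aux {m : ℕ} (hm : 0 < m) (y : Fin m → ℝ) (hy : ∀ j, 0 ≤ y j) :
    ∏ j, y j ≤ (1 / m) * ∑ j, y j ^ m := by
  have hm' : (m : ℝ) ≠ 0 := Nat.cast_ne_zero.mpr hm.ne'
  have key := Real.geom_mean_le_arith_mean_weighted Finset.univ
      (fun _ : Fin m => (1 / m : ℝ)) (fun j => y j ^ m)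
      (fun i _ => by positivity)
      (by simp only [Finset.sum_const, Finset.card_univ, Fintype.card_fin, nsmul_eq_mul]
          field_simp)
      (fun i _ => pow_nonneg (hy i) m)
  calc ∏ j, y j = ∏ j, ((y j ^ m : ℝ) ^ ((1 : ℝ) / m)) := by
        refine Finset.prod_congr rfl fun j _ => ?_
        rw [← Real.rpow_natCast (y j) m, ← Real.rpow_mul (hy j), mul_one_div,
          div_self hm', Real.rpow_one]
    _ ≤ ∑ j, (1 / m : ℝ) * y j ^ m := key
    _ = (1 / m) * ∑ j, y j ^ m := by rw [Finset.mul_sum]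

/-- an even order diagonally dominated symmetric tensor is positive semi-definite. -/
theorem diag_dom_symmetric_psd
    {m n : ℕ} [NeZero m] (hm : 2 ≤ m) (hmeven : Even m) (hn : 1 ≤ n)
    (A : (Fin m → Fin n) → ℝ) (hA : IsSymmT A) (hdd : DiagDom A) :
    ∀ x : Fin n → ℝ, 0 ≤ tApply A x := by
  intro x
  have hm0 : 0 < m := lt_of_lt_of_le two_pos hm
  have hm' : (m : ℝ) ≠ 0 := Nat.cast_ne_zero.mpr hm0.ne'
  set S : Finset (Fin m → Fin n) := univ.filter (fun f => ¬ f = fun _ => f 0) with hS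
  -- membership in S is stable under precomposition with a permutation
  have hSmem : ∀ (f : Fin m → Fin n) (σ : Equiv.Perm (Fin m)), f ∈ S → f ∘ σ ∈ S := by
    intro f σ hf
    simp only [hS, mem_filter, mem_univ, true_and] at hf ⊢
    intro h
    apply hf
    have hc : ∀ a, f a = f (σ 0) := by
      intro a
      have := congrFun h (σ.symm a)
      simpa [Function.comp] using this
    funext a
    exact (hc a).trans (hc 0).symm
  -- splitting into diagonal and off-diagonal parts
  have hsplit : tApply A x =
      (∑ i : Fin n, A (fun _ => i) * x i ^ m) + ∑ f ∈ S, A f * ∏ j, x (f j) := by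
    rw [tApply, ← Finset.sum_filter_add_sum_filter_not univ (fun f : Fin m → Fin n =>
      f = fun _ => f 0) (fun f => A f * ∏ j, x (f j))]
    congr 1
    refine (Finset.sum_nbij' (fun i => (fun _ => i : Fin m → Fin n)) (fun f => f 0)
      ?_ ?_ ?_ ?_ ?_).symm
    · intro i _; simp
    · intro f hf; simp
    · intro i _; rfl
    · intro f hf
      simp only [mem_filter] at hf
      exact hf.2.symm
    · intro i _
      simp [Finset.prod_const]
  -- the key symmetry identity
  have key : ∀ j : Fin m, ∑ f ∈ S, |A f| * |x (f j)| ^ m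
      = ∑ i : Fin n, offDiagSum A i * |x i| ^ m := by
    intro j
    have h1 : ∑ f ∈ S, |A f| * |x (f j)| ^ m = ∑ f ∈ S, |A f| * |x (f 0)| ^ m := by
      refine Finset.sum_nbij' (fun f => f ∘ Equiv.swap (0 : Fin m) j)
        (fun f => f ∘ Equiv.swap (0 : Fin m) j) ?_ ?_ ?_ ?_ ?_
      · intro f hf; exact hSmem f _ hf
      · intro f hf; exact hSmem f _ hf
      · intro f _
        funext a
        simp [Function.comp, Equiv.swap_apply_self]
      · intro f _
        funext a
        simp [Function.comp, Equiv.swap_apply_self]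
      · intro f _
        rw [hA (Equiv.swap (0 : Fin m) j) f]
        simp [Function.comp, Equiv.swap_apply_left]
    rw [h1, ← Finset.sum_fiberwise S (fun f => f 0) (fun f => |A f| * |x (f 0)| ^ m)]
    refine Finset.sum_congr rfl fun i _ => ?_
    have hfe : S.filter (fun f => f 0 = i)
        = univ.filter (fun f : Fin m → Fin n => f 0 = i ∧ f ≠ (fun _ => i)) := by
      ext f
      simp only [hS, mem_filter, mem_univ, true_and, Finset.filter_filter, ne_eq]
      constructor
      · rintro ⟨hne, h0⟩; exact ⟨h0, by rw [← h0]; exact hne⟩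
      · rintro ⟨h0, hne⟩; exact ⟨by rw [h0]; exact hne, h0⟩
    rw [hfe, offDiagSum, Finset.sum_mul]
    refine Finset.sum_congr rfl fun f hf => ?_
    simp only [mem_filter] at hf
    rw [hf.2.1]
  -- bound the off-diagonal part
  have hbound : ∀ f ∈ S, -(|A f| * ((1 / m) * ∑ j, |x (f j)| ^ m)) ≤ A f * ∏ j, x (f j) := by
    intro f _
    have h1 : |A f * ∏ j, x (f j)| ≤ |A f| * ((1 / m) * ∑ j, |x (f j)| ^ m) := by
      rw [abs_mul, abs_prod]
      exact mul_le_mul_of_nonneg_left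
        (amgm_aux hm0 (fun j => |x (f j)|) (fun j => abs_nonneg _)) (abs_nonneg _)
    linarith [neg_abs_le (A f * ∏ j, x (f j))]
  have hsum2 : ∑ f ∈ S, (1 / (m : ℝ)) * ∑ j, |A f| * |x (f j)| ^ m
      = ∑ i : Fin n, offDiagSum A i * |x i| ^ m := by
    rw [← Finset.mul_sum, Finset.sum_comm]
    have : ∀ j : Fin m, ∑ f ∈ S, |A f| * |x (f j)| ^ m
        = ∑ i : Fin n, offDiagSum A i * |x i| ^ m := key
    rw [Finset.sum_congr rfl (fun j _ => this j), Finset.sum_const, Finset.card_univ,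
      Fintype.card_fin, nsmul_eq_mul, ← mul_assoc, one_div, inv_mul_cancel₀ hm', one_mul]
  have hoff : -(∑ i : Fin n, offDiagSum A i * |x i| ^ m) ≤ ∑ f ∈ S, A f * ∏ j, x (f j) := by
    calc -(∑ i : Fin n, offDiagSum A i * |x i| ^ m)
        = ∑ f ∈ S, -(|A f| * ((1 / m) * ∑ j, |x (f j)| ^ m)) := by
          rw [← hsum2, ← Finset.sum_neg_distrib]
          refine Finset.sum_congr rfl fun f _ => ?_
          rw [show ∑ j, |A f| * |x (f j)| ^ m = |A f| * ∑ j, |x (f j)| ^ m from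
            (Finset.mul_sum _ _ _).symm]
          ring
      _ ≤ ∑ f ∈ S, A f * ∏ j, x (f j) := Finset.sum_le_sum hbound
  have hxpow : ∀ i : Fin n, x i ^ m = |x i| ^ m := fun i => (hmeven.pow_abs (x i)).symm
  have hdiag : 0 ≤ ∑ i : Fin n, (A (fun _ => i) - offDiagSum A i) * |x i| ^ m := by
    refine Finset.sum_nonneg fun i _ => mul_nonneg ?_ (by positivity)
    linarith [hdd i]
  rw [hsplit]
  have : ∑ i : Fin n, A (fun _ => i) * x i ^ m
      = ∑ i : Fin n, A (fun _ => i) * |x i| ^ m := by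
    refine Finset.sum_congr rfl fun i _ => by rw [hxpow i]
  rw [this]
  have hexp : ∑ i : Fin n, (A (fun _ => i) - offDiagSum A i) * |x i| ^ m
      = (∑ i : Fin n, A (fun _ => i) * |x i| ^ m)
        - ∑ i : Fin n, offDiagSum A i * |x i| ^ m := by
    rw [← Finset.sum_sub_distrib]
    exact Finset.sum_congr rfl fun i _ => by ring
  linarith [hoff, hdiag, hexp.le, hexp.ge]
end

section
/- Let m ≥ 2 be even and let A be a real m-th order n-dimensional symmetric tensor. If A is strictly diagonally dominated, then A is positive definite: A xᵐ > 0 for all nonzero x ∈ ℝⁿ. -/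
open Finset

variable {m n : ℕ}

-- AM-GM helper
lemma amgm {m : ℕ} (hm : m ≠ 0) (y : Fin m → ℝ) (hy : ∀ j, 0 ≤ y j) :
    ∏ j, y j ≤ (1 / m) * ∑ j, y j ^ m := by
  have hmpos : (0:ℝ) < m := by positivity
  have h := Real.geom_mean_le_arith_mean_weighted univ (fun _ => (1/m : ℝ))
    (fun j => y j ^ m) (fun i _ => by positivity)
    (by simp [mul_one_div]; exact mul_inv_cancel₀ hmpos.ne')
    (fun i _ => pow_nonneg (hy i) m)
  calc ∏ j, y j = ∏ j, (y j ^ m) ^ (1/m : ℝ) := by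
        refine Finset.prod_congr rfl fun j _ => ?_
        rw [← Real.rpow_natCast (y j) m, ← Real.rpow_mul (hy j),
          mul_one_div_cancel (by exact_mod_cast hmpos.ne'), Real.rpow_one]
    _ ≤ ∑ j, (1/m : ℝ) * y j ^ m := h
    _ = (1/m) * ∑ j, y j ^ m := by rw [Finset.mul_sum]

lemma comp_const {m n : ℕ} [NeZero m] (σ : Equiv.Perm (Fin m)) (f : Fin m → Fin n)
    (h : f = fun _ => f 0) : f ∘ σ = fun _ => (f ∘ σ) 0 := by
  funext k
  simp only [Function.comp]
  rw [congrFun h (σ k), congrFun h (σ 0)]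

lemma comp_const_iff {m n : ℕ} [NeZero m] (σ : Equiv.Perm (Fin m)) (f : Fin m → Fin n) :
    (f ∘ σ = fun _ => (f ∘ σ) 0) ↔ (f = fun _ => f 0) := by
  constructor
  · intro h
    have h1 := comp_const σ.symm (f ∘ σ) h
    have h2 : (f ∘ σ) ∘ ⇑σ.symm = f := by funext k; simp
    rw [h2] at h1
    exact h1
  · exact comp_const σ f

/-- an even order strictly diagonally dominated symmetric tensor is
positive definite. -/
theorem strict_diag_dom_symmetric_pd
    {m n : ℕ} [NeZero m] (hm : 2 ≤ m) (hmeven : Even m) (hn : 1 ≤ n)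
    (A : (Fin m → Fin n) → ℝ) (hA : IsSymmT A) (hdd : StrictDiagDom A) :
    ∀ x : Fin n → ℝ, x ≠ 0 → 0 < tApply A x := by
  intro x hx
  classical
  have hm0 : m ≠ 0 := NeZero.ne m
  have hcard : (Fintype.card (Fin m)) = m := Fintype.card_fin m
  set P : (Fin m → Fin n) → Prop := fun f => f = fun _ => f 0 with hP
  -- split into diagonal and off-diagonal parts
  have hsplit : tApply A x =
      (∑ f ∈ univ.filter P, A f * ∏ j, x (f j)) +
      (∑ f ∈ univ.filter (fun f => ¬ P f), A f * ∏ j, x (f j)) :=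
    (Finset.sum_filter_add_sum_filter_not _ _ _).symm
  -- diagonal part
  have hdiag : (∑ f ∈ univ.filter P, A f * ∏ j, x (f j))
      = ∑ i : Fin n, A (fun _ => i) * x i ^ m := by
    refine Finset.sum_nbij' (fun f => f 0) (fun i => fun _ => i) ?_ ?_ ?_ ?_ ?_
    · intro f hf; exact Finset.mem_univ _
    · intro i hi; simp [P]
    · intro f hf
      simp only [Finset.mem_filter, hP] at hf
      exact hf.2.symm
    · intro i hi; rfl
    · intro f hf
      simp only [Finset.mem_filter, hP] at hf
      rw [hf.2]
      simp [Finset.prod_const, hcard]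
  -- symmetry: each index contributes the same
  have hsym : ∀ j : Fin m,
      (∑ f ∈ univ.filter (fun f => ¬ P f), |A f| * |x (f j)| ^ m)
      = ∑ f ∈ univ.filter (fun f => ¬ P f), |A f| * |x (f 0)| ^ m := by
    intro j
    refine Finset.sum_nbij' (fun f => f ∘ Equiv.swap 0 j) (fun f => f ∘ Equiv.swap 0 j)
      ?_ ?_ ?_ ?_ ?_
    · intro f hf
      simp only [Finset.mem_filter, hP] at hf ⊢
      exact ⟨Finset.mem_univ _, fun h => hf.2 ((comp_const_iff _ f).mp h)⟩
    · intro f hf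
      simp only [Finset.mem_filter, hP] at hf ⊢
      exact ⟨Finset.mem_univ _, fun h => hf.2 ((comp_const_iff _ f).mp h)⟩
    · intro f hf; funext k; simp [Function.comp, Equiv.swap_apply_self]
    · intro f hf; funext k; simp [Function.comp, Equiv.swap_apply_self]
    · intro f hf
      rw [hA (Equiv.swap 0 j) f]
      simp [Function.comp, Equiv.swap_apply_left]
  -- grouping by f 0
  have hgroup : (∑ f ∈ univ.filter (fun f => ¬ P f), |A f| * |x (f 0)| ^ m)
      = ∑ i : Fin n, offDiagSum A i * |x i| ^ m := by
    rw [← Finset.sum_fiberwise (univ.filter (fun f => ¬ P f))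
      (fun f => f 0) (fun f => |A f| * |x (f 0)| ^ m)]
    refine Finset.sum_congr rfl fun i _ => ?_
    rw [Finset.filter_filter, offDiagSum]
    have hfe : (univ.filter fun f : Fin m → Fin n => ¬ P f ∧ f 0 = i)
        = univ.filter (fun f => f 0 = i ∧ f ≠ fun _ => i) := by
      refine Finset.filter_congr fun f _ => ?_
      constructor
      · rintro ⟨h1, h2⟩
        refine ⟨h2, fun h => h1 ?_⟩
        show f = fun _ => f 0
        funext k
        rw [congrFun h k, h2]
      · rintro ⟨h2, h1⟩
        refine ⟨fun h => h1 ?_, h2⟩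
        have h' : f = fun _ => f 0 := h
        funext k
        rw [congrFun h' k, h2]
    rw [hfe, Finset.sum_mul]
    refine Finset.sum_congr rfl fun f hf => ?_
    simp only [Finset.mem_filter] at hf
    rw [hf.2.1]
  -- bound the off-diagonal part
  have hbound : |∑ f ∈ univ.filter (fun f => ¬ P f), A f * ∏ j, x (f j)|
      ≤ ∑ i : Fin n, offDiagSum A i * |x i| ^ m := by
    calc |∑ f ∈ univ.filter (fun f => ¬ P f), A f * ∏ j, x (f j)|
        ≤ ∑ f ∈ univ.filter (fun f => ¬ P f), |A f * ∏ j, x (f j)| :=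
          Finset.abs_sum_le_sum_abs _ _
      _ = ∑ f ∈ univ.filter (fun f => ¬ P f), |A f| * ∏ j, |x (f j)| := by
          refine Finset.sum_congr rfl fun f _ => ?_
          rw [abs_mul, Finset.abs_prod]
      _ ≤ ∑ f ∈ univ.filter (fun f => ¬ P f), |A f| * ((1/m) * ∑ j, |x (f j)| ^ m) := by
          refine Finset.sum_le_sum fun f _ => ?_
          exact mul_le_mul_of_nonneg_left
            (amgm hm0 (fun j => |x (f j)|) (fun j => abs_nonneg _)) (abs_nonneg _)
      _ = ∑ f ∈ univ.filter (fun f => ¬ P f), ∑ j : Fin m, (1/m : ℝ) * (|A f| * |x (f j)| ^ m) := by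
          refine Finset.sum_congr rfl fun f _ => ?_
          rw [Finset.mul_sum, Finset.mul_sum]
          exact Finset.sum_congr rfl fun j _ => by ring
      _ = ∑ j : Fin m, ∑ f ∈ univ.filter (fun f => ¬ P f), (1/m : ℝ) * (|A f| * |x (f j)| ^ m) :=
          Finset.sum_comm
      _ = (1/m) * ∑ j : Fin m, ∑ f ∈ univ.filter (fun f => ¬ P f), |A f| * |x (f j)| ^ m := by
          rw [Finset.mul_sum]
          exact Finset.sum_congr rfl fun j _ => by rw [Finset.mul_sum]
      _ = (1/m) * ∑ j : Fin m, ∑ f ∈ univ.filter (fun f => ¬ P f), |A f| * |x (f 0)| ^ m := by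
          rw [Finset.sum_congr rfl fun j _ => hsym j]
      _ = ∑ f ∈ univ.filter (fun f => ¬ P f), |A f| * |x (f 0)| ^ m := by
          rw [Finset.sum_const, Finset.card_univ, hcard, nsmul_eq_mul]
          field_simp
      _ = ∑ i : Fin n, offDiagSum A i * |x i| ^ m := hgroup
  -- the positive lower bound
  have hlower : ∑ i : Fin n, (A (fun _ => i) - offDiagSum A i) * |x i| ^ m ≤ tApply A x := by
    rw [hsplit, hdiag]
    have h1 : ∑ i : Fin n, A (fun _ => i) * x i ^ m
        = ∑ i : Fin n, A (fun _ => i) * |x i| ^ m := by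
      refine Finset.sum_congr rfl fun i _ => ?_
      rw [hmeven.pow_abs]
    rw [h1]
    have := neg_abs_le (∑ f ∈ univ.filter (fun f => ¬ P f), A f * ∏ j, x (f j))
    have h3 : -(∑ i : Fin n, offDiagSum A i * |x i| ^ m)
        ≤ ∑ f ∈ univ.filter (fun f => ¬ P f), A f * ∏ j, x (f j) := by
      refine le_trans ?_ this
      exact neg_le_neg hbound
    have hexp : ∑ i : Fin n, (A (fun _ => i) - offDiagSum A i) * |x i| ^ m
        = (∑ i : Fin n, A (fun _ => i) * |x i| ^ m)
          - ∑ i : Fin n, offDiagSum A i * |x i| ^ m := by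
      rw [← Finset.sum_sub_distrib]
      refine Finset.sum_congr rfl fun i _ => by ring
    rw [hexp]
    linarith
  refine lt_of_lt_of_le ?_ hlower
  have hex : ∃ i : Fin n, x i ≠ 0 := by
    by_contra h
    push_neg at h
    exact hx (funext h)
  obtain ⟨i0, hi0⟩ := hex
  refine Finset.sum_pos' (fun i _ => ?_) ⟨i0, Finset.mem_univ _, ?_⟩
  · exact mul_nonneg (sub_nonneg.mpr (hdd i).le) (by positivity)
  · have h1 : 0 < A (fun _ => i0) - offDiagSum A i0 := sub_pos.mpr (hdd i0)
    have h2 : 0 < |x i0| ^ m := pow_pos (abs_pos.mpr hi0) m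
    positivity
end

section
/- Let m ≥ 2 be even and let B be a real m-th order n-dimensional symmetric B₀ tensor. Then B is positive semi-definite: B xᵐ ≥ 0 for all x ∈ ℝⁿ. -/
open Finset

variable {m n : ℕ}

lemma allOne_eq_prod (J : Finset (Fin n)) (f : Fin m → Fin n) :
    allOne m J f = ∏ j, (if f j ∈ J then (1:ℝ) else 0) := by
  unfold allOne
  by_cases h : ∀ j, f j ∈ J
  · simp [h]
  · push_neg at h
    obtain ⟨j, hj⟩ := h
    rw [if_neg, Finset.prod_eq_zero (Finset.mem_univ j) (by simp [hj])]
    push_neg; exact ⟨j, hj⟩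

lemma sum_row_prod [NeZero m] (i : Fin n) (g : Fin m → Fin n → ℝ) :
    ∑ f ∈ univ.filter (fun f : Fin m → Fin n => f 0 = i), ∏ j, g j (f j)
      = g 0 i * ∏ j ∈ univ.erase (0 : Fin m), ∑ v, g j v := by
  have h1 : univ.filter (fun f : Fin m → Fin n => f 0 = i)
      = Fintype.piFinset (fun j : Fin m => if j = 0 then {i} else univ) := by
    ext f
    simp only [mem_filter, mem_univ, true_and, Fintype.mem_piFinset]
    constructor
    · intro h j; by_cases hj : j = 0 <;> simp [hj, h]
    · intro h; have := h 0; simpa using this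
  rw [h1, ← Finset.prod_univ_sum]
  rw [← Finset.mul_prod_erase univ _ (Finset.mem_univ (0 : Fin m))]
  congr 1
  · simp
  · apply Finset.prod_congr rfl
    intro j hj
    rw [if_neg (Finset.mem_erase.mp hj).1]

lemma rowSum_allOne [NeZero m] (J : Finset (Fin n)) (i : Fin n) :
    rowSum (allOne m J) i = if i ∈ J then (J.card : ℝ) ^ (m - 1) else 0 := by
  unfold rowSum
  calc ∑ f ∈ univ.filter (fun f : Fin m → Fin n => f 0 = i), allOne m J f
      = ∑ f ∈ univ.filter (fun f : Fin m → Fin n => f 0 = i),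
          ∏ j, (if f j ∈ J then (1:ℝ) else 0) := by
        exact Finset.sum_congr rfl fun f _ => allOne_eq_prod J f
    _ = (if i ∈ J then (1:ℝ) else 0) * ∏ j ∈ univ.erase (0 : Fin m),
          ∑ v, (if v ∈ J then (1:ℝ) else 0) := sum_row_prod i (fun _ v => if v ∈ J then (1:ℝ) else 0)
    _ = _ := by
        have hs : ∑ v : Fin n, (if v ∈ J then (1:ℝ) else 0) = (J.card : ℝ) := by
          simp [Finset.sum_ite_mem]
        rw [hs, Finset.prod_const]
        have hcard : (univ.erase (0 : Fin m)).card = m - 1 := by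
          rw [Finset.card_erase_of_mem (Finset.mem_univ _), Finset.card_univ, Fintype.card_fin]
        rw [hcard]
        by_cases h : i ∈ J <;> simp [h]

lemma tApply_allOne (J : Finset (Fin n)) (x : Fin n → ℝ) :
    tApply (allOne m J) x = (∑ j ∈ J, x j) ^ m := by
  unfold tApply
  have : ∀ f : Fin m → Fin n, allOne m J f * ∏ j, x (f j)
      = ∏ j, (if f j ∈ J then x (f j) else 0) := by
    intro f
    rw [allOne_eq_prod, ← Finset.prod_mul_distrib]
    apply Finset.prod_congr rfl
    intro j _
    by_cases h : f j ∈ J <;> simp [h]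
  rw [Finset.sum_congr rfl fun f _ => this f]
  rw [← Fintype.piFinset_univ,
    ← Finset.prod_univ_sum (fun _ : Fin m => (univ : Finset (Fin n)))
      (fun _ v => if v ∈ J then x v else 0)]
  have : ∀ j : Fin m, (∑ v, (if v ∈ J then x v else 0)) = ∑ v ∈ J, x v := by
    intro j; simp [Finset.sum_ite_mem]
  rw [Finset.prod_congr rfl fun j _ => this j, Finset.prod_const, Finset.card_univ,
    Fintype.card_fin]

lemma isSymmT_allOne (J : Finset (Fin n)) : IsSymmT (allOne m J) := by
  intro σ f
  unfold allOne
  congr 1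
  simp only [Function.comp_apply, eq_iff_iff]
  constructor
  · intro h j
    have := h (σ.symm j); simpa using this
  · intro h j; exact h _

lemma tApply_sub_smul (B C : (Fin m → Fin n) → ℝ) (h : ℝ) (x : Fin n → ℝ) :
    tApply (fun f => B f - h * C f) x = tApply B x - h * tApply C x := by
  unfold tApply
  rw [Finset.mul_sum, ← Finset.sum_sub_distrib]
  apply Finset.sum_congr rfl
  intro f _; ring

lemma rowSum_sub_smul [NeZero m] (B C : (Fin m → Fin n) → ℝ) (h : ℝ) (i : Fin n) :
    rowSum (fun f => B f - h * C f) i = rowSum B i - h * rowSum C i := by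
  unfold rowSum
  rw [Finset.mul_sum, ← Finset.sum_sub_distrib]

lemma const_iff [NeZero m] (f : Fin m → Fin n) : (f = fun _ => f 0) ↔ ∀ a b, f a = f b := by
  constructor
  · intro h a b; rw [h]
  · intro h; funext a; exact h a 0

/-- membership transfer for composition with a permutation -/
lemma comp_nonconst [NeZero m] (f : Fin m → Fin n) (σ : Equiv.Perm (Fin m))
    (h : f ≠ fun _ => f 0) : (f ∘ σ) ≠ fun _ => (f ∘ σ) 0 := by
  intro hc
  apply h
  rw [const_iff] at hc ⊢
  intro a b
  have := hc (σ.symm a) (σ.symm b)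
  simpa using this

/-- Symmetrization: replace `f j` by `f 0` in a weighted sum over nonconstant `f`. -/
lemma sum_swap_eq (B : (Fin m → Fin n) → ℝ) (hsym : IsSymmT B) [NeZero m] (j : Fin m)
    (g : Fin n → ℝ) :
    ∑ f ∈ univ.filter (fun f : Fin m → Fin n => f ≠ fun _ => f 0), |B f| * g (f j)
      = ∑ f ∈ univ.filter (fun f : Fin m → Fin n => f ≠ fun _ => f 0), |B f| * g (f 0) := by
  apply Finset.sum_nbij' (i := fun f => f ∘ Equiv.swap (0 : Fin m) j)
    (j := fun f => f ∘ Equiv.swap (0 : Fin m) j)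
  · intro f hf
    simp only [mem_filter, mem_univ, true_and] at hf ⊢
    exact comp_nonconst f _ hf
  · intro f hf
    simp only [mem_filter, mem_univ, true_and] at hf ⊢
    exact comp_nonconst f _ hf
  · intro f _; funext a; simp [Equiv.swap_apply_self]
  · intro f _; funext a; simp [Equiv.swap_apply_self]
  · intro f _
    rw [hsym (Equiv.swap (0 : Fin m) j) f]
    simp [Equiv.swap_apply_left]

/-- AM-GM for the product of `m` absolute values. -/
lemma prod_abs_le (hm1 : 1 ≤ m) (y : Fin m → ℝ) :
    ∏ j, |y j| ≤ ∑ j, (1 / (m : ℝ)) * |y j| ^ m := by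
  have hm0 : (m : ℝ) ≠ 0 := Nat.cast_ne_zero.mpr (by omega)
  have key := Real.geom_mean_le_arith_mean_weighted univ (fun _ : Fin m => 1 / (m : ℝ))
    (fun j => |y j| ^ m) (fun i _ => by positivity)
    (by simp [Finset.sum_const, Finset.card_univ]; field_simp)
    (fun i _ => by positivity)
  calc ∏ j, |y j| = ∏ j, (|y j| ^ m) ^ (1 / (m : ℝ)) := by
        apply Finset.prod_congr rfl
        intro j _
        rw [← Real.rpow_natCast (|y j|) m, ← Real.rpow_mul (abs_nonneg _)]
        rw [mul_one_div, div_self hm0, Real.rpow_one]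
    _ ≤ ∑ j, (1 / (m : ℝ)) * |y j| ^ m := key

lemma psd_of_diagDom [NeZero m] (hmeven : Even m) (B : (Fin m → Fin n) → ℝ)
    (hsym : IsSymmT B) (hdd : DiagDom B) (x : Fin n → ℝ) : 0 ≤ tApply B x := by
  have hm1 : 1 ≤ m := Nat.one_le_iff_ne_zero.mpr (NeZero.ne m)
  set S : Finset (Fin m → Fin n) := univ.filter (fun f => f ≠ fun _ => f 0) with hS
  set C : Finset (Fin m → Fin n) := univ.filter (fun f => f = fun _ => f 0) with hC
  -- split the sum
  have hsplit : tApply B x = (∑ f ∈ C, B f * ∏ j, x (f j)) + ∑ f ∈ S, B f * ∏ j, x (f j) := by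
    rw [tApply, ← Finset.sum_filter_add_sum_filter_not univ (fun f => f = fun _ => f 0)]
  -- constant part
  have hconst : (∑ f ∈ C, B f * ∏ j, x (f j)) = ∑ i, B (fun _ => i) * |x i| ^ m := by
    apply Finset.sum_nbij' (i := fun f => f 0) (j := fun i _ => i)
    · intro f _; exact Finset.mem_univ _
    · intro i _; simp [hC]
    · intro f hf; simp only [hC, mem_filter] at hf; exact hf.2.symm
    · intro i _; rfl
    · intro f hf
      simp only [hC, mem_filter, mem_univ, true_and] at hf
      rw [hf]
      simp [Finset.prod_const, hmeven.pow_abs]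
  -- bound on the nonconstant part
  have key : ∑ f ∈ S, |B f| * ∏ j, |x (f j)| ≤ ∑ i, offDiagSum B i * |x i| ^ m := by
    calc ∑ f ∈ S, |B f| * ∏ j, |x (f j)|
        ≤ ∑ f ∈ S, |B f| * ∑ j, (1 / (m : ℝ)) * |x (f j)| ^ m := by
          apply Finset.sum_le_sum
          intro f _
          exact mul_le_mul_of_nonneg_left (prod_abs_le hm1 (fun j => x (f j))) (abs_nonneg _)
      _ = ∑ j : Fin m, ∑ f ∈ S, |B f| * ((1 / (m : ℝ)) * |x (f j)| ^ m) := by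
          rw [Finset.sum_comm]
          exact Finset.sum_congr rfl fun f _ => Finset.mul_sum _ _ _
      _ = ∑ j : Fin m, ∑ f ∈ S, |B f| * ((1 / (m : ℝ)) * |x (f 0)| ^ m) :=
          Finset.sum_congr rfl fun j _ =>
            sum_swap_eq B hsym j (fun v => (1 / (m : ℝ)) * |x v| ^ m)
      _ = ∑ f ∈ S, |B f| * |x (f 0)| ^ m := by
          have hm0 : (m : ℝ) ≠ 0 := Nat.cast_ne_zero.mpr (by omega)
          rw [Finset.sum_const, Finset.card_univ, Fintype.card_fin, nsmul_eq_mul,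
            Finset.mul_sum]
          apply Finset.sum_congr rfl
          intro f _
          field_simp
      _ = ∑ i, ∑ f ∈ S.filter (fun f => f 0 = i), |B f| * |x (f 0)| ^ m := by
          exact (Finset.sum_fiberwise S (fun f => f 0) (fun f => |B f| * |x (f 0)| ^ m)).symm
      _ = ∑ i, offDiagSum B i * |x i| ^ m := by
          apply Finset.sum_congr rfl
          intro i _
          have hset : S.filter (fun f => f 0 = i)
              = univ.filter (fun f : Fin m → Fin n => f 0 = i ∧ f ≠ (fun _ => i)) := by
            ext f
            simp only [hS, mem_filter, mem_univ, true_and, Finset.filter_filter]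
            constructor
            · rintro ⟨hne, h0⟩; exact ⟨h0, by rwa [h0] at hne⟩
            · rintro ⟨h0, hne⟩; exact ⟨by rwa [← h0] at hne, h0⟩
          rw [hset, offDiagSum, Finset.sum_mul]
          apply Finset.sum_congr rfl
          intro f hf
          simp only [mem_filter, mem_univ, true_and] at hf
          rw [hf.1]
  -- put it together
  have hnc : -(∑ i, offDiagSum B i * |x i| ^ m) ≤ ∑ f ∈ S, B f * ∏ j, x (f j) := by
    have h1 : ∀ f ∈ S, -(|B f| * ∏ j, |x (f j)|) ≤ B f * ∏ j, x (f j) := by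
      intro f _
      have : |B f * ∏ j, x (f j)| = |B f| * ∏ j, |x (f j)| := by
        rw [abs_mul, Finset.abs_prod]
      calc -(|B f| * ∏ j, |x (f j)|) = -|B f * ∏ j, x (f j)| := by rw [this]
        _ ≤ B f * ∏ j, x (f j) := neg_abs_le _
    calc -(∑ i, offDiagSum B i * |x i| ^ m) ≤ -(∑ f ∈ S, |B f| * ∏ j, |x (f j)|) := by
          exact neg_le_neg key
      _ = ∑ f ∈ S, -(|B f| * ∏ j, |x (f j)|) := by rw [Finset.sum_neg_distrib]
      _ ≤ ∑ f ∈ S, B f * ∏ j, x (f j) := Finset.sum_le_sum h1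
  rw [hsplit, hconst]
  have final : 0 ≤ (∑ i, B (fun _ => i) * |x i| ^ m) - ∑ i, offDiagSum B i * |x i| ^ m := by
    rw [← Finset.sum_sub_distrib]
    apply Finset.sum_nonneg
    intro i _
    rw [← sub_mul]
    apply mul_nonneg (by linarith [hdd i]) (by positivity)
  linarith

lemma mem_hatJ_iff [NeZero m] (B : (Fin m → Fin n) → ℝ) (i : Fin n) :
    i ∈ hatJ B ↔ ∃ f : Fin m → Fin n, f 0 = i ∧ f ≠ (fun _ => i) ∧ 0 < B f := by
  simp [hatJ]

/-- An off-diagonal entry with some index outside `hatJ B` is non-positive. -/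
lemma entry_nonpos [NeZero m] (B : (Fin m → Fin n) → ℝ) (hsym : IsSymmT B)
    (f : Fin m → Fin n) (hf : f ≠ fun _ => f 0) (j₀ : Fin m) (hj : f j₀ ∉ hatJ B) :
    B f ≤ 0 := by
  set g : Fin m → Fin n := f ∘ Equiv.swap (0 : Fin m) j₀ with hg
  have hg0 : g 0 = f j₀ := by simp [hg, Equiv.swap_apply_left]
  have hBg : B g = B f := hsym _ f
  by_contra hpos
  push_neg at hpos
  apply hj
  rw [mem_hatJ_iff]
  refine ⟨g, hg0, ?_, by rwa [hBg]⟩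
  intro hc
  apply hf
  funext a
  have : f = fun b => g (Equiv.swap (0 : Fin m) j₀ b) := by
    funext b; simp [hg, Equiv.swap_apply_self]
  rw [this, hc]

lemma b0_step [NeZero m] (hn : 1 ≤ n) (B : (Fin m → Fin n) → ℝ)
    (hsym : IsSymmT B) (hB : IsB0 B) (hne : (hatJ B).Nonempty) :
    ∃ h : ℝ, 0 ≤ h ∧ IsSymmT (fun f => B f - h * allOne m (hatJ B) f) ∧
      IsB0 (fun f => B f - h * allOne m (hatJ B) f) ∧
      (hatJ (fun f => B f - h * allOne m (hatJ B) f)).card < (hatJ B).card := by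
  set J := hatJ B with hJ
  set R : Fin n → Finset (Fin m → Fin n) :=
    fun i => univ.filter (fun f => f 0 = i ∧ f ≠ fun _ => i) with hR
  have hmemR : ∀ i (f : Fin m → Fin n), f ∈ R i ↔ (f 0 = i ∧ f ≠ fun _ => i) := by
    intro i f; simp [hR]
  have hRne : ∀ i ∈ J, (R i).Nonempty := by
    intro i hi
    obtain ⟨f, h1, h2, _⟩ := (mem_hatJ_iff B i).mp hi
    exact ⟨f, (hmemR i f).mpr ⟨h1, h2⟩⟩
  set d : Fin n → ℝ := fun i => if h : (R i).Nonempty then (R i).sup' h B else 0 with hd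
  have hd_ge : ∀ i ∈ J, ∀ f ∈ R i, B f ≤ d i := by
    intro i hi f hf
    simp only [hd, dif_pos (hRne i hi)]
    exact Finset.le_sup' B hf
  have hd_mem : ∀ i ∈ J, ∃ f ∈ R i, d i = B f := by
    intro i hi
    simp only [hd, dif_pos (hRne i hi)]
    obtain ⟨f, hf, he⟩ := Finset.exists_mem_eq_sup' (hRne i hi) B
    exact ⟨f, hf, he⟩
  have hd_pos : ∀ i ∈ J, 0 < d i := by
    intro i hi
    obtain ⟨f, h1, h2, h3⟩ := (mem_hatJ_iff B i).mp hi
    exact lt_of_lt_of_le h3 (hd_ge i hi f ((hmemR i f).mpr ⟨h1, h2⟩))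
  have hd_le : ∀ i ∈ J, d i ≤ (1 / (n : ℝ) ^ (m - 1)) * rowSum B i := by
    intro i hi
    simp only [hd, dif_pos (hRne i hi)]
    apply Finset.sup'_le
    intro f hf
    rw [hmemR] at hf
    exact (hB i).2 f hf.1 hf.2
  set h : ℝ := J.inf' hne d with hh
  have hpos : 0 < h := by
    rw [hh, Finset.lt_inf'_iff]
    exact hd_pos
  have hh_le : ∀ i ∈ J, h ≤ d i := fun i hi => Finset.inf'_le d hi
  have np_pos : (0:ℝ) < (n : ℝ) ^ (m - 1) := by positivity
  have hJc : ((J.card : ℝ)) ^ (m - 1) ≤ (n : ℝ) ^ (m - 1) := by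
    apply pow_le_pow_left₀ (by positivity)
    exact_mod_cast Finset.card_le_card (Finset.subset_univ J) |>.trans_eq (by simp)
  set B' : (Fin m → Fin n) → ℝ := fun f => B f - h * allOne m J f with hB'
  -- row sums of B'
  have hrow : ∀ i, rowSum B' i
      = rowSum B i - h * (if i ∈ J then (J.card : ℝ) ^ (m - 1) else 0) := by
    intro i
    rw [hB', rowSum_sub_smul, rowSum_allOne]
  have hrow_nonneg : ∀ i, 0 ≤ rowSum B' i := by
    intro i
    rw [hrow]
    by_cases hi : i ∈ J
    · rw [if_pos hi]
      have h1 : h * (J.card : ℝ) ^ (m - 1) ≤ d i * (n : ℝ) ^ (m - 1) := by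
        apply mul_le_mul (hh_le i hi) hJc (by positivity) (le_of_lt (hd_pos i hi))
      have h2 : d i * (n : ℝ) ^ (m - 1) ≤ rowSum B i := by
        have := hd_le i hi
        rw [div_mul_eq_mul_div, one_mul] at this
        calc d i * (n : ℝ) ^ (m - 1) ≤ (rowSum B i / (n : ℝ) ^ (m - 1)) * (n : ℝ) ^ (m - 1) :=
              mul_le_mul_of_nonneg_right this (le_of_lt np_pos)
          _ = rowSum B i := by field_simp
      linarith
    · rw [if_neg hi]
      have := (hB i).1
      linarith
  -- entries of B'
  have hentry_in : ∀ f : Fin m → Fin n, (∀ j, f j ∈ J) → B' f = B f - h := by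
    intro f hf
    simp [hB', allOne, hf]
  have hentry_out : ∀ f : Fin m → Fin n, ¬(∀ j, f j ∈ J) → B' f = B f := by
    intro f hf
    simp [hB', allOne, hf]
  -- off-diagonal entries with an index outside J are nonpositive
  have key_nonpos : ∀ (i : Fin n) (f : Fin m → Fin n), f 0 = i → f ≠ (fun _ => i) →
      ¬(∀ j, f j ∈ J) → B f ≤ 0 := by
    intro i f h0 hne' hout
    push_neg at hout
    obtain ⟨j₀, hj₀⟩ := hout
    apply entry_nonpos B hsym f (by rwa [h0]) j₀
    exact hj₀
  refine ⟨h, le_of_lt hpos, ?_, ?_, ?_⟩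
  · intro σ f
    simp only [hB']
    rw [hsym σ f, isSymmT_allOne J σ f]
  · -- IsB0
    intro i
    refine ⟨hrow_nonneg i, ?_⟩
    intro f h0 hne'
    show B' f ≤ 1 / (n : ℝ) ^ (m - 1) * rowSum B' i
    by_cases hcase : ∀ j, f j ∈ J
    · have hiJ : i ∈ J := by rw [← h0]; exact hcase 0
      rw [hentry_in f hcase, hrow, if_pos hiJ]
      have hBf : B f ≤ (1 / (n : ℝ) ^ (m - 1)) * rowSum B i := (hB i).2 f h0 hne'
      have h3 : h * (J.card : ℝ) ^ (m - 1) ≤ h * (n : ℝ) ^ (m - 1) :=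
        mul_le_mul_of_nonneg_left hJc (le_of_lt hpos)
      rw [mul_sub]
      have h4 : (1 / (n : ℝ) ^ (m - 1)) * (h * (J.card : ℝ) ^ (m - 1)) ≤ h := by
        rw [one_div, inv_mul_le_iff₀ np_pos, mul_comm] at *
        linarith [h3]
      linarith
    · rw [hentry_out f hcase]
      have h1 : B f ≤ 0 := key_nonpos i f h0 hne' hcase
      have h2 : 0 ≤ (1 / (n : ℝ) ^ (m - 1)) * rowSum B' i := by
        apply mul_nonneg (by positivity) (hrow_nonneg i)
      linarith
  · -- card decreases
    obtain ⟨i₀, hi₀J, hdi₀⟩ := Finset.exists_mem_eq_inf' hne d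
    have hsub : hatJ B' ⊆ J.erase i₀ := by
      intro i hi
      obtain ⟨f, h0, hne', hposf⟩ := (mem_hatJ_iff B' i).mp hi
      by_cases hcase : ∀ j, f j ∈ J
      · have hiJ : i ∈ J := by rw [← h0]; exact hcase 0
        rw [Finset.mem_erase]
        refine ⟨?_, hiJ⟩
        intro hii
        subst hii
        have hfR : f ∈ R i := (hmemR i f).mpr ⟨h0, hne'⟩
        have : B f ≤ d i := hd_ge i hiJ f hfR
        have hBf' : B' f = B f - h := hentry_in f hcase
        rw [hBf'] at hposf
        have heq : h = d i := hh.trans hdi₀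
        linarith
      · have : B' f = B f := hentry_out f hcase
        rw [this] at hposf
        exact absurd hposf (not_lt.mpr (key_nonpos i f h0 hne' hcase))
    calc (hatJ B').card ≤ (J.erase i₀).card := Finset.card_le_card hsub
      _ < J.card := Finset.card_erase_lt_of_mem hi₀J

lemma rowSum_split [NeZero m] (B : (Fin m → Fin n) → ℝ) (i : Fin n) :
    rowSum B i = B (fun _ => i)
      + ∑ f ∈ univ.filter (fun f : Fin m → Fin n => f 0 = i ∧ f ≠ (fun _ => i)), B f := by
  have hmem : (fun _ => i : Fin m → Fin n) ∈ univ.filter (fun f : Fin m → Fin n => f 0 = i) := by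
    simp
  have hset : univ.filter (fun f : Fin m → Fin n => f 0 = i ∧ f ≠ (fun _ => i))
      = (univ.filter (fun f : Fin m → Fin n => f 0 = i)).erase (fun _ => i) := by
    ext f
    simp only [mem_filter, mem_univ, true_and, Finset.mem_erase]
    tauto
  rw [hset, rowSum, ← Finset.add_sum_erase _ B hmem]

lemma diagDom_of_empty_hatJ [NeZero m] (B : (Fin m → Fin n) → ℝ) (hB : IsB0 B)
    (hempty : hatJ B = ∅) : DiagDom B := by
  intro i
  have hnonpos : ∀ f ∈ univ.filter (fun f : Fin m → Fin n => f 0 = i ∧ f ≠ (fun _ => i)),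
      B f ≤ 0 := by
    intro f hf
    simp only [mem_filter, mem_univ, true_and] at hf
    by_contra hc
    push_neg at hc
    have : i ∈ hatJ B := (mem_hatJ_iff B i).mpr ⟨f, hf.1, hf.2, hc⟩
    rw [hempty] at this
    exact absurd this (Finset.notMem_empty i)
  have habs : offDiagSum B i
      = -∑ f ∈ univ.filter (fun f : Fin m → Fin n => f 0 = i ∧ f ≠ (fun _ => i)), B f := by
    rw [offDiagSum, ← Finset.sum_neg_distrib]
    exact Finset.sum_congr rfl fun f hf => abs_of_nonpos (hnonpos f hf)
  have := (hB i).1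
  rw [rowSum_split B i] at this
  rw [habs]
  linarith

theorem main_aux [NeZero m] (hmeven : Even m) (hn : 1 ≤ n) :
    ∀ (N : ℕ) (B : (Fin m → Fin n) → ℝ), (hatJ B).card ≤ N → IsSymmT B → IsB0 B →
      ∀ x : Fin n → ℝ, 0 ≤ tApply B x := by
  intro N
  induction N with
  | zero =>
    intro B hcard hsym hB x
    have hempty : hatJ B = ∅ := Finset.card_eq_zero.mp (Nat.le_zero.mp hcard)
    exact psd_of_diagDom hmeven B hsym (diagDom_of_empty_hatJ B hB hempty) x
  | succ N ih =>
    intro B hcard hsym hB x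
    by_cases hne : (hatJ B).Nonempty
    · obtain ⟨h, hh0, hsym', hB0', hcard'⟩ := b0_step hn B hsym hB hne
      have h1 := ih _ (by omega) hsym' hB0' x
      have h2 := tApply_sub_smul B (allOne m (hatJ B)) h x
      rw [tApply_allOne] at h2
      have h3 : 0 ≤ (∑ j ∈ hatJ B, x j) ^ m := hmeven.pow_nonneg _
      nlinarith
    · have hempty : hatJ B = ∅ := Finset.not_nonempty_iff_eq_empty.mp hne
      exact psd_of_diagDom hmeven B hsym (diagDom_of_empty_hatJ B hB hempty) x

/-- an even order symmetric B₀ tensor is positive semi-definite. -/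
theorem even_symmetric_b0_tensor_psd
    {m n : ℕ} [NeZero m] (hm : 2 ≤ m) (hmeven : Even m) (hn : 1 ≤ n)
    (B : (Fin m → Fin n) → ℝ) (hsym : IsSymmT B) (hB : IsB0 B) :
    ∀ x : Fin n → ℝ, 0 ≤ tApply B x := by
  exact fun x => main_aux hmeven hn (hatJ B).card B le_rfl hsym hB x
end

section
/- Let m ≥ 2 be even and let B be a real m-th order n-dimensional symmetric B tensor. Then B is positive definite: B xᵐ > 0 for all nonzero x ∈ ℝⁿ. -/
/-!
Choose `d i ≥ 0` above every off-diagonal entry of row `i` of `B` but with `n^(m-1) * d i` still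
below the `i`-th row sum; this is exactly what the B-tensor condition allows. With
`P f = min_k d (f k)` write `B = (B - P) + P`.

By symmetry every off-diagonal entry `B f` is at most `d (f k)` for each `k`, so `B - P` is a
symmetric Z tensor, and its row sums stay positive. For such a tensor AM-GM bounds each
off-diagonal monomial by the mean of the `|x (f k)|^m`, and symmetry collapses the resulting
bound to `∑ i, rowSum i * x i ^ m > 0`.

`P` is PSD by a layer-cake decomposition: if `d` vanishes outside `S` and `h` is its minimum on
`S`, then `P` is `h • E^S` plus the min tensor of `d - h` on `S`, which vanishes outside a
smaller set; and `E^S xᵐ = (∑ i ∈ S, x i) ^ m ≥ 0` for even `m`.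
-/

open Finset

variable {m n : ℕ}

lemma tApply_add (A C : (Fin m → Fin n) → ℝ) (x : Fin n → ℝ) :
    tApply (A + C) x = tApply A x + tApply C x := by
  simp only [tApply, Pi.add_apply, add_mul, sum_add_distrib]

lemma tApply_smul (c : ℝ) (A : (Fin m → Fin n) → ℝ) (x : Fin n → ℝ) :
    tApply (c • A) x = c * tApply A x := by
  simp only [tApply, Pi.smul_apply, smul_eq_mul, mul_sum, mul_assoc]

lemma rowSum_sub [NeZero m] (A C : (Fin m → Fin n) → ℝ) (i : Fin n) :
    rowSum (A - C) i = rowSum A i - rowSum C i := by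
  simp only [rowSum, Pi.sub_apply, sum_sub_distrib]

lemma IsSymmT.sub {A C : (Fin m → Fin n) → ℝ} (hA : IsSymmT A) (hC : IsSymmT C) :
    IsSymmT (A - C) :=
  fun σ f => by simp only [Pi.sub_apply, hA σ f, hC σ f]

lemma comp_perm_ne_const [NeZero m] {f : Fin m → Fin n} (hf : f ≠ fun _ => f 0)
    (σ : Equiv.Perm (Fin m)) : f ∘ σ ≠ fun _ => (f ∘ σ) 0 := by
  intro h
  refine hf (funext fun k => ?_)
  have hk := congrFun h (σ.symm k)
  have h0 := congrFun h (σ.symm 0)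
  simp_all

lemma card_filter_apply_eq (k : Fin m) (i : Fin n) :
    #{f : Fin m → Fin n | f k = i} = n ^ (m - 1) := by
  simpa using Fintype.card_filter_piFinset_const_eq_of_mem (univ : Finset (Fin n)) k (mem_univ i)

lemma IsSymmT.sum_mul_apply_eq [NeZero m] {A : (Fin m → Fin n) → ℝ} (hA : IsSymmT A)
    (y : Fin n → ℝ) (k : Fin m) :
    ∑ f, A f * y (f k) = ∑ i, rowSum A i * y i := by
  calc ∑ f, A f * y (f k) = ∑ f, A f * y (f 0) :=
        Fintype.sum_bijective (· ∘ Equiv.swap 0 k)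
          (Function.Involutive.bijective fun f => by ext; simp) _ _
          fun f => by simp [hA (Equiv.swap 0 k) f]
    _ = ∑ i, rowSum A i * y i := by
        rw [← sum_fiberwise univ (fun f : Fin m → Fin n => f 0)]
        refine sum_congr rfl fun i _ => ?_
        rw [rowSum, sum_mul]
        exact sum_congr rfl fun f hf => by rw [(mem_filter.1 hf).2]

lemma prod_le_sum_pow_card_div_card {ι : Type*} [Fintype ι] [Nonempty ι] (a : ι → ℝ)
    (ha : ∀ i, 0 ≤ a i) : ∏ i, a i ≤ (∑ i, a i ^ Fintype.card ι) / Fintype.card ι := by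
  have hk : (Fintype.card ι : ℝ) ≠ 0 := Nat.cast_ne_zero.2 Fintype.card_ne_zero
  have amgm := Real.geom_mean_le_arith_mean_weighted univ (fun _ => (Fintype.card ι : ℝ)⁻¹)
    (fun i => a i ^ Fintype.card ι) (fun _ _ => by positivity) (by simp [hk])
    (fun i _ => pow_nonneg (ha i) _)
  have hroot : ∀ i, (a i ^ Fintype.card ι) ^ (Fintype.card ι : ℝ)⁻¹ = a i := fun i =>
    Real.pow_rpow_inv_natCast (ha i) Fintype.card_ne_zero
  rw [sum_div]
  simpa only [hroot, inv_mul_eq_div] using amgm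

theorem IsZ.sum_rowSum_mul_pow_le_tApply [NeZero m] (hm : Even m) {A : (Fin m → Fin n) → ℝ}
    (hZ : IsZ A) (hA : IsSymmT A) (x : Fin n → ℝ) :
    ∑ i, rowSum A i * x i ^ m ≤ tApply A x := by
  have hm0 : (m : ℝ) ≠ 0 := Nat.cast_ne_zero.2 (NeZero.ne m)
  have termwise : ∀ f : Fin m → Fin n,
      A f * ((∑ j, |x (f j)| ^ m) / m) ≤ A f * ∏ j, x (f j) := by
    intro f
    by_cases hf : f = fun _ => f 0
    · rw [hf]
      simp [hm.pow_abs, hm0]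
    · refine mul_le_mul_of_nonpos_left ?_ (hZ (f 0) f rfl hf)
      calc ∏ j, x (f j) ≤ ∏ j, |x (f j)| := (le_abs_self _).trans (abs_prod _ _).le
        _ ≤ _ := by
          simpa using prod_le_sum_pow_card_div_card (fun j => |x (f j)|) fun _ => abs_nonneg _
  calc ∑ i, rowSum A i * x i ^ m = (∑ j : Fin m, ∑ i, rowSum A i * |x i| ^ m) / m := by
        simp [hm.pow_abs, hm0]
    _ = (∑ j : Fin m, ∑ f, A f * |x (f j)| ^ m) / m := by
        simp only [fun j => hA.sum_mul_apply_eq (fun i => |x i| ^ m) j]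
    _ = ∑ f, A f * ((∑ j, |x (f j)| ^ m) / m) := by
        rw [sum_comm, sum_div]
        exact sum_congr rfl fun f _ => by rw [← mul_sum, mul_div_assoc]
    _ ≤ tApply A x := sum_le_sum fun f _ => termwise f

theorem IsZ.tApply_pos [NeZero m] (hm : Even m) {A : (Fin m → Fin n) → ℝ} (hZ : IsZ A)
    (hA : IsSymmT A) (hrow : ∀ i, 0 < rowSum A i) {x : Fin n → ℝ} (hx : x ≠ 0) :
    0 < tApply A x := by
  obtain ⟨i, hi⟩ := Function.ne_iff.1 hx
  refine lt_of_lt_of_le ?_ (hZ.sum_rowSum_mul_pow_le_tApply hm hA x)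
  exact sum_pos' (fun j _ => mul_nonneg (hrow j).le (hm.pow_nonneg _))
    ⟨i, mem_univ i, mul_pos (hrow i) (hm.pow_pos hi)⟩

noncomputable def minTensor (m : ℕ) [NeZero m] (d : Fin n → ℝ) : (Fin m → Fin n) → ℝ :=
  fun f => univ.inf' univ_nonempty (d ∘ f)

section minTensor

variable [NeZero m] {d : Fin n → ℝ}

lemma minTensor_le (f : Fin m → Fin n) (k : Fin m) : minTensor m d f ≤ d (f k) :=
  inf'_le _ (mem_univ k)

lemma le_minTensor {c : ℝ} {f : Fin m → Fin n} (h : ∀ k, c ≤ d (f k)) : c ≤ minTensor m d f :=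
  le_inf' _ _ fun k _ => h k

lemma minTensor_isSymmT (d : Fin n → ℝ) : IsSymmT (minTensor m d) := by
  intro σ f
  refine le_antisymm (le_minTensor fun k => ?_) (le_minTensor fun k => minTensor_le f (σ k))
  simpa using minTensor_le (f ∘ σ) (σ.symm k)

lemma minTensor_eq_zero_of_apply_eq_zero (hd : ∀ i, 0 ≤ d i) {f : Fin m → Fin n} {k : Fin m}
    (hk : d (f k) = 0) : minTensor m d f = 0 :=
  le_antisymm (hk ▸ minTensor_le f k) (le_minTensor fun j => hd (f j))

lemma ite_mem_sub_nonneg {S : Finset (Fin n)} {h : ℝ} (hh : ∀ i ∈ S, h ≤ d i) (i : Fin n) :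
    0 ≤ if i ∈ S then d i - h else 0 := by
  split_ifs with hi
  exacts [sub_nonneg.2 (hh i hi), le_rfl]

lemma minTensor_eq_smul_allOne_add {S : Finset (Fin n)} {h : ℝ} (hd : ∀ i, 0 ≤ d i)
    (hdS : ∀ i ∉ S, d i = 0) (hh : ∀ i ∈ S, h ≤ d i) :
    minTensor m d =
      h • allOne m S + minTensor m (fun i => if i ∈ S then d i - h else 0) := by
  ext f
  simp only [Pi.add_apply, Pi.smul_apply, smul_eq_mul, allOne]
  by_cases hf : ∀ k, f k ∈ S
  · rw [if_pos hf, mul_one, minTensor, minTensor,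
      apply_inf'_eq_inf'_comp _ (h + ·) fun a b => (min_add_add_left h a b).symm]
    exact inf'_congr _ rfl fun k _ => by simp [hf k]
  · obtain ⟨k, hk⟩ := not_forall.1 hf
    rw [if_neg hf, mul_zero, zero_add,
      minTensor_eq_zero_of_apply_eq_zero hd (hdS _ hk),
      minTensor_eq_zero_of_apply_eq_zero (ite_mem_sub_nonneg hh) (if_neg hk)]

theorem tApply_minTensor_nonneg (hm : Even m) (hd : ∀ i, 0 ≤ d i) (x : Fin n → ℝ) :
    0 ≤ tApply (minTensor m d) x := by
  suffices ∀ (S : Finset (Fin n)) (d : Fin n → ℝ), (∀ i, 0 ≤ d i) → (∀ i ∉ S, d i = 0) →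
      0 ≤ tApply (minTensor m d) x from this univ d hd fun i hi => absurd (mem_univ i) hi
  intro S
  induction S using Finset.strongInduction with
  | H S ih =>
    intro d hd hdS
    rcases S.eq_empty_or_nonempty with rfl | hS
    · have hzero : minTensor m d = 0 :=
        funext fun f => minTensor_eq_zero_of_apply_eq_zero hd (k := 0) (hdS _ (notMem_empty _))
      simp [hzero, tApply]
    obtain ⟨i₀, hi₀, hmin⟩ := S.exists_min_image d hS
    rw [minTensor_eq_smul_allOne_add hd hdS hmin, tApply_add, tApply_smul, tApply_allOne]
    refine add_nonneg (mul_nonneg (hd i₀) (hm.pow_nonneg _))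
      (ih _ (erase_ssubset hi₀) _ (ite_mem_sub_nonneg hmin) fun i hi => ?_)
    by_cases hiS : i ∈ S
    · rw [if_pos hiS, show i = i₀ by simpa [hiS] using hi, sub_self]
    · exact if_neg hiS

end minTensor

lemma IsB.exists_offDiag_bound [NeZero m] {B : (Fin m → Fin n) → ℝ} (hB : IsB B) :
    ∃ d : Fin n → ℝ, (∀ i, 0 ≤ d i) ∧ (∀ i, (n : ℝ) ^ (m - 1) * d i < rowSum B i) ∧
      ∀ f : Fin m → Fin n, (f ≠ fun _ => f 0) → B f ≤ d (f 0) := by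
  let offDiagRow (i : Fin n) : Finset ℝ :=
    insert 0 ((univ.filter fun f : Fin m → Fin n => f 0 = i ∧ f ≠ fun _ => i).image B)
  refine ⟨fun i => (offDiagRow i).max' (insert_nonempty _ _),
    fun i => le_max' _ _ (mem_insert_self _ _), fun i => ?_,
    fun f hf => le_max' _ _ (mem_insert_of_mem (mem_image_of_mem _ (by simpa using hf)))⟩
  have hN : (0 : ℝ) < (n : ℝ) ^ (m - 1) := pow_pos (Nat.cast_pos.2 i.pos) _
  rw [← lt_div_iff₀' hN, max'_lt_iff]
  intro y hy
  rcases mem_insert.1 hy with rfl | hy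
  · exact div_pos (hB i).1 hN
  · obtain ⟨f, hf, rfl⟩ := mem_image.1 hy
    simp only [mem_filter, mem_univ, true_and] at hf
    simpa [div_eq_inv_mul] using (hB i).2 f hf.1 hf.2

lemma isZ_sub_minTensor [NeZero m] {B : (Fin m → Fin n) → ℝ} (hB : IsSymmT B) {d : Fin n → ℝ}
    (hd : ∀ f : Fin m → Fin n, (f ≠ fun _ => f 0) → B f ≤ d (f 0)) :
    IsZ (B - minTensor m d) := by
  rintro _ f rfl hf
  refine sub_nonpos.2 (le_minTensor fun k => ?_)
  simpa [hB (Equiv.swap 0 k) f] using hd _ (comp_perm_ne_const hf (Equiv.swap 0 k))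

lemma rowSum_sub_minTensor_pos [NeZero m] {B : (Fin m → Fin n) → ℝ} {d : Fin n → ℝ} {i : Fin n}
    (hd : (n : ℝ) ^ (m - 1) * d i < rowSum B i) : 0 < rowSum (B - minTensor m d) i := by
  have hP : rowSum (minTensor m d) i ≤ (n : ℝ) ^ (m - 1) * d i := by
    calc rowSum (minTensor m d) i ≤ #{f : Fin m → Fin n | f 0 = i} • d i :=
          sum_le_card_nsmul _ _ _ fun f hf => (mem_filter.1 hf).2 ▸ minTensor_le f 0
      _ = (n : ℝ) ^ (m - 1) * d i := by rw [card_filter_apply_eq, nsmul_eq_mul, Nat.cast_pow]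
  rw [rowSum_sub]
  linarith

theorem even_symmetric_b_tensor_pd_general
    {m n : ℕ} [NeZero m] (hmeven : Even m)
    (B : (Fin m → Fin n) → ℝ) (hsym : IsSymmT B) (hB : IsB B) :
    ∀ x : Fin n → ℝ, x ≠ 0 → 0 < tApply B x := by
  intro x hx
  obtain ⟨d, hd_nonneg, hd_row, hd_offDiag⟩ := hB.exists_offDiag_bound
  have hZ : 0 < tApply (B - minTensor m d) x :=
    (isZ_sub_minTensor hsym hd_offDiag).tApply_pos hmeven (hsym.sub (minTensor_isSymmT d))
      (fun i => rowSum_sub_minTensor_pos (hd_row i)) hx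
  calc 0 < tApply (B - minTensor m d) x + tApply (minTensor m d) x :=
        add_pos_of_pos_of_nonneg hZ (tApply_minTensor_nonneg hmeven hd_nonneg x)
    _ = tApply B x := by rw [← tApply_add, sub_add_cancel]

/-- an even order symmetric B tensor is positive definite. -/
theorem even_symmetric_b_tensor_pd
    {m n : ℕ} [NeZero m] (hm : 2 ≤ m) (hmeven : Even m) (hn : 1 ≤ n)
    (B : (Fin m → Fin n) → ℝ) (hsym : IsSymmT B) (hB : IsB B) :
    ∀ x : Fin n → ℝ, x ≠ 0 → 0 < tApply B x :=
  even_symmetric_b_tensor_pd_general hmeven B hsym hB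
end

section
/- Let A be a real m-th order n-dimensional Z tensor. Then A is a B₀ tensor if and only if A is diagonally dominated. -/
open Finset

variable {m n : ℕ}

lemma rowSum_eq_sub [NeZero m] (A : (Fin m → Fin n) → ℝ) (hZ : IsZ A) (i : Fin n) :
    rowSum A i = A (fun _ => i) - offDiagSum A i := by
  have hmem : (fun _ => i) ∈ univ.filter (fun f : Fin m → Fin n => f 0 = i) := by
    simp
  have hset : univ.filter (fun f : Fin m → Fin n => f 0 = i ∧ f ≠ (fun _ => i))
      = (univ.filter (fun f : Fin m → Fin n => f 0 = i)).erase (fun _ => i) := by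
    ext f
    simp [Finset.mem_erase, and_comm]
  have habs : offDiagSum A i =
      ∑ f ∈ univ.filter (fun f : Fin m → Fin n => f 0 = i ∧ f ≠ (fun _ => i)), (-A f) := by
    refine Finset.sum_congr rfl fun f hf => ?_
    simp only [Finset.mem_filter] at hf
    exact abs_of_nonpos (hZ i f hf.2.1 hf.2.2)
  rw [rowSum, ← Finset.add_sum_erase _ _ hmem, habs, hset, Finset.sum_neg_distrib]
  ring

/-- a Z tensor is a B₀ tensor iff it is diagonally dominated. -/
theorem z_tensor_b0_iff_diag_dom
    {m n : ℕ} [NeZero m] (hm : 2 ≤ m) (hn : 1 ≤ n)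
    (A : (Fin m → Fin n) → ℝ) (hZ : IsZ A) :
    IsB0 A ↔ DiagDom A := by
  constructor
  · intro hB i
    have h := (hB i).1
    rw [rowSum_eq_sub A hZ i] at h
    linarith
  · intro hD i
    have h : 0 ≤ rowSum A i := by
      have := hD i
      rw [rowSum_eq_sub A hZ i]
      linarith
    refine ⟨h, fun f hf0 hfd => ?_⟩
    have hAf : A f ≤ 0 := hZ i f hf0 hfd
    have : (0:ℝ) ≤ (1 / (n : ℝ) ^ (m - 1)) * rowSum A i := by
      apply mul_nonneg _ h
      positivity
    linarith
end

section
/- Let A be a real m-th order n-dimensional Z tensor. Then A is a B tensor if and only if A is strictly diagonally dominated. -/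
open Finset

variable {m n : ℕ}

lemma rowSum_eq_z {m n : ℕ} [NeZero m] (A : (Fin m → Fin n) → ℝ) (hZ : IsZ A) (i : Fin n) :
    rowSum A i = A (fun _ => i) - offDiagSum A i := by
  have hmem : (fun _ => i) ∈ univ.filter (fun f : Fin m → Fin n => f 0 = i) := by
    simp
  have herase : (univ.filter (fun f : Fin m → Fin n => f 0 = i)).erase (fun _ => i)
      = univ.filter (fun f : Fin m → Fin n => f 0 = i ∧ f ≠ (fun _ => i)) := by
    ext f
    simp [Finset.mem_erase, and_comm]
  have habs : offDiagSum A i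
      = - ∑ f ∈ univ.filter (fun f : Fin m → Fin n => f 0 = i ∧ f ≠ (fun _ => i)), A f := by
    unfold offDiagSum
    rw [← Finset.sum_neg_distrib]
    apply Finset.sum_congr rfl
    intro f hf
    simp only [Finset.mem_filter] at hf
    exact abs_of_nonpos (hZ (f 0) f rfl (hf.2.1 ▸ hf.2.2))
  unfold rowSum
  rw [← Finset.add_sum_erase _ _ hmem, herase, habs]
  ring

/-- a Z tensor is a B tensor iff it is strictly diagonally dominated. -/
theorem z_tensor_b_iff_strict_diag_dom
    {m n : ℕ} [NeZero m] (hm : 2 ≤ m) (hn : 1 ≤ n)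
    (A : (Fin m → Fin n) → ℝ) (hZ : IsZ A) :
    IsB A ↔ StrictDiagDom A := by
  constructor
  · intro hB i
    have h := (hB i).1
    have := rowSum_eq_z A hZ i
    linarith
  · intro hD i
    have hrs : 0 < rowSum A i := by
      have := rowSum_eq_z A hZ i
      have := hD i
      linarith
    refine ⟨hrs, fun f hf0 hfne => ?_⟩
    have hle : A f ≤ 0 := hZ i f hf0 hfne
    have hnpos : (0 : ℝ) < (1 / (n : ℝ) ^ (m - 1)) * rowSum A i := by
      apply mul_pos _ hrs
      positivity
    linarith
end
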